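/- arXiv:2105.02084 — 8 statements merged into one kernel-verified Lean document; each statement's English description precedes it below -/
import Mathlib

section
/- Let G be a finite simple graph with arboricity at most α (every nonempty induced subgraph on k ≥ 2 vertices has at most α(k−1) edges). Fix ε > 0 and set Δ = (1/ε + 1)·2α. Let V_high be the set of vertices of degree at least Δ. Let VC be any vertex cover of G, and let U be the set of vertices of V_high not in VC. Then |U| ≤ ε·|VC|. -/
open Finset SimpleGraph

private lemma adj_of_mem_edge {V : Type*} (G : SimpleGraph V) (e : Sym2 V) (u v : V)
    (he : e ∈ G.edgeSet) (hu : u ∈ e) (hv : v ∈ e) (huv : u ≠ v) : G.Adj u v := by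
  have := (Sym2.mem_and_mem_iff huv).mp ⟨hu, hv⟩
  subst this
  exact he

theorem stmt_3 {V : Type*} [Fintype V] [DecidableEq V]
    (G : SimpleGraph V) [DecidableRel G.Adj]
    (α ε Δ : ℝ) (hα : 1 ≤ α) (hε : 0 < ε)
    (hΔ : Δ = (1 / ε + 1) * (2 * α))
    -- arboricity at most α
    (harb : ∀ U : Finset V, 2 ≤ U.card →
      ((G.edgeFinset.filter fun e => ∀ v ∈ e, v ∈ U).card : ℝ) ≤ α * ((U.card : ℝ) - 1))
    (Vhigh : Finset V) (hhigh : Vhigh = Finset.univ.filter fun v => Δ ≤ (G.degree v : ℝ))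
    (VC : Finset V) (hVC : ∀ u v : V, G.Adj u v → u ∈ VC ∨ v ∈ VC)
    (U : Finset V) (hU : U = Vhigh \ VC) :
    (U.card : ℝ) ≤ ε * (VC.card : ℝ) := by
  have hUVC : Disjoint U VC := hU ▸ sdiff_disjoint
  have hUnotVC : ∀ u ∈ U, u ∉ VC := fun u hu => Finset.disjoint_left.mp hUVC hu
  have hdegU : ∀ u ∈ U, Δ ≤ (G.degree u : ℝ) := by
    intro u hu
    rw [hU, hhigh] at hu
    exact (Finset.mem_filter.mp (Finset.mem_sdiff.mp hu).1).2
  rcases Finset.eq_empty_or_nonempty U with h0 | ⟨u0, hu0⟩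
  · simp only [h0, Finset.card_empty, Nat.cast_zero]
    positivity
  -- U is independent
  have hind : ∀ u ∈ U, ∀ v ∈ U, ¬ G.Adj u v := by
    intro u hu v hv hadj
    rcases hVC u v hadj with h | h
    · exact hUnotVC u hu h
    · exact hUnotVC v hv h
  have hΔ2 : (2 : ℝ) ≤ Δ := by
    rw [hΔ]
    have h1 : 0 < 1 / ε := by positivity
    nlinarith
  -- u0 has a neighbor, which is in VC
  have hdeg0 : 0 < G.degree u0 := by
    have h1 := hdegU u0 hu0
    have h2 : (0 : ℝ) < (G.degree u0 : ℝ) := by linarith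
    exact_mod_cast h2
  obtain ⟨v0, hv0⟩ := (G.degree_pos_iff_exists_adj u0).mp hdeg0
  have hv0VC : v0 ∈ VC := by
    rcases hVC u0 v0 hv0 with h | h
    · exact absurd h (hUnotVC u0 hu0)
    · exact h
  set W := U ∪ VC with hW
  have hWcard : W.card = U.card + VC.card := Finset.card_union_of_disjoint hUVC
  have hW2 : 2 ≤ W.card := by
    have h1 : 1 ≤ U.card := Finset.card_pos.mpr ⟨u0, hu0⟩
    have h2 : 1 ≤ VC.card := Finset.card_pos.mpr ⟨v0, hv0VC⟩
    omega
  -- incidence finsets of distinct vertices of U are disjoint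
  have hdisj : ∀ u ∈ U, ∀ v ∈ U, u ≠ v →
      Disjoint (G.incidenceFinset u) (G.incidenceFinset v) := by
    intro u hu v hv huv
    rw [Finset.disjoint_left]
    intro e he he'
    rw [mem_incidenceFinset] at he he'
    exact hind u hu v hv (adj_of_mem_edge G e u v he.1 he.2 he'.2 huv)
  -- all edges incident to U lie within W
  have hsub : U.biUnion (fun u => G.incidenceFinset u) ⊆
      G.edgeFinset.filter fun e => ∀ v ∈ e, v ∈ W := by
    intro e he
    obtain ⟨u, hu, he⟩ := Finset.mem_biUnion.mp he
    rw [mem_incidenceFinset] at he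
    rw [Finset.mem_filter, mem_edgeFinset]
    refine ⟨he.1, ?_⟩
    intro v hv
    by_cases hvu : v = u
    · subst hvu; exact Finset.mem_union_left _ hu
    · have hadj : G.Adj u v := adj_of_mem_edge G e u v he.1 he.2 hv (Ne.symm hvu)
      rcases hVC u v hadj with h | h
      · exact absurd h (hUnotVC u hu)
      · exact Finset.mem_union_right _ h
  have hsum : ∑ u ∈ U, G.degree u ≤
      (G.edgeFinset.filter fun e => ∀ v ∈ e, v ∈ W).card := by
    calc ∑ u ∈ U, G.degree u = ∑ u ∈ U, (G.incidenceFinset u).card := by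
          refine Finset.sum_congr rfl fun u _ => ?_
          exact (G.card_incidenceFinset_eq_degree u).symm
      _ = (U.biUnion (fun u => G.incidenceFinset u)).card := (Finset.card_biUnion hdisj).symm
      _ ≤ _ := Finset.card_le_card hsub
  have hlow : Δ * (U.card : ℝ) ≤ ((∑ u ∈ U, G.degree u : ℕ) : ℝ) := by
    push_cast
    calc Δ * (U.card : ℝ) = ∑ _u ∈ U, Δ := by
          rw [Finset.sum_const, nsmul_eq_mul]; ring
      _ ≤ _ := Finset.sum_le_sum hdegU
  have harbW := harb W hW2
  have hchain : Δ * (U.card : ℝ) ≤ α * ((U.card : ℝ) + (VC.card : ℝ) - 1) := by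
    have hc : ((W.card : ℕ) : ℝ) = (U.card : ℝ) + (VC.card : ℝ) := by
      rw [hWcard]; push_cast; ring
    calc Δ * (U.card : ℝ) ≤ (∑ u ∈ U, G.degree u : ℕ) := hlow
      _ ≤ ((G.edgeFinset.filter fun e => ∀ v ∈ e, v ∈ W).card : ℝ) := by exact_mod_cast hsum
      _ ≤ α * ((W.card : ℝ) - 1) := harbW
      _ = α * ((U.card : ℝ) + (VC.card : ℝ) - 1) := by rw [hc]
  -- final arithmetic
  have hεΔ : ε * Δ = (1 + ε) * (2 * α) := by
    rw [hΔ]; field_simp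
  have hx : (0 : ℝ) ≤ (U.card : ℝ) := Nat.cast_nonneg _
  have hy : (0 : ℝ) ≤ (VC.card : ℝ) := Nat.cast_nonneg _
  nlinarith [mul_le_mul_of_nonneg_left hchain (le_of_lt hε), mul_nonneg hx hy,
    mul_nonneg (le_of_lt hε) hx, mul_nonneg hx (by linarith : (0:ℝ) ≤ α)]
end

section
/- Let G be a finite simple graph with arboricity at most α, fix ε > 0 and t ≥ 1, and set Δ = (1/ε + 1)·2α. Let V_high be the vertices of degree at least Δ, V_low the remainder, and G_low = G[V_low]. Let VC* be a minimum vertex cover of G, and let VC_t be a vertex cover of G_low with |VC_t| ≤ t·(minimum vertex cover size of G_low). Then VC_t ∪ V_high is a vertex cover of G of size at most (t + ε)·|VC*|. -/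
open Finset SimpleGraph

theorem stmt_4 {V : Type*} [Fintype V] [DecidableEq V]
    (G : SimpleGraph V) [DecidableRel G.Adj]
    (α ε t Δ : ℝ) (hα : 1 ≤ α) (hε : 0 < ε) (ht : 1 ≤ t)
    (hΔ : Δ = (1 / ε + 1) * (2 * α))
    -- arboricity at most α
    (harb : ∀ U : Finset V, 2 ≤ U.card →
      ((G.edgeFinset.filter fun e => ∀ v ∈ e, v ∈ U).card : ℝ) ≤ α * ((U.card : ℝ) - 1))
    (Vhigh Vlow : Finset V)
    (hhigh : Vhigh = Finset.univ.filter fun v => Δ ≤ (G.degree v : ℝ))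
    (hlow : Vlow = Finset.univ \ Vhigh)
    -- VC* is a minimum vertex cover of G
    (VCstar : Finset V) (hVCstar : ∀ u v : V, G.Adj u v → u ∈ VCstar ∨ v ∈ VCstar)
    (hVCstarMin : ∀ C : Finset V, (∀ u v : V, G.Adj u v → u ∈ C ∨ v ∈ C) → VCstar.card ≤ C.card)
    -- VC_t is a t-approximate vertex cover of G_low = G[V_low]
    (VCt : Finset V) (hVCtSub : VCt ⊆ Vlow)
    (hVCt : ∀ u v : V, G.Adj u v → u ∈ Vlow → v ∈ Vlow → u ∈ VCt ∨ v ∈ VCt)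
    (hVCtApx : ∀ C : Finset V, C ⊆ Vlow →
      (∀ u v : V, G.Adj u v → u ∈ Vlow → v ∈ Vlow → u ∈ C ∨ v ∈ C) →
      (VCt.card : ℝ) ≤ t * (C.card : ℝ)) :
    (∀ u v : V, G.Adj u v → u ∈ VCt ∪ Vhigh ∨ v ∈ VCt ∪ Vhigh) ∧
    ((VCt ∪ Vhigh).card : ℝ) ≤ (t + ε) * (VCstar.card : ℝ) := by
  classical
  constructor
  · intro u v huv
    by_cases hu : u ∈ Vhigh
    · exact Or.inl (mem_union_right _ hu)
    · by_cases hv : v ∈ Vhigh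
      · exact Or.inr (mem_union_right _ hv)
      · have hu' : u ∈ Vlow := by simp [hlow, hu]
        have hv' : v ∈ Vlow := by simp [hlow, hv]
        rcases hVCt u v huv hu' hv' with h | h
        · exact Or.inl (mem_union_left _ h)
        · exact Or.inr (mem_union_left _ h)
  · -- size bound
    -- VCt bound
    have hcoverLow : ∀ u v : V, G.Adj u v → u ∈ Vlow → v ∈ Vlow →
        u ∈ VCstar ∩ Vlow ∨ v ∈ VCstar ∩ Vlow := by
      intro u v huv hu hv
      rcases hVCstar u v huv with h | h
      · exact Or.inl (mem_inter.2 ⟨h, hu⟩)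
      · exact Or.inr (mem_inter.2 ⟨h, hv⟩)
    have hVCt_le : (VCt.card : ℝ) ≤ t * ((VCstar ∩ Vlow).card : ℝ) :=
      hVCtApx _ inter_subset_right hcoverLow
    -- high-degree vertices not in VCstar
    set H : Finset V := Vhigh \ VCstar with hH
    have hHcard : (H.card : ℝ) ≤ ε * (VCstar.card : ℝ) := by
      rcases H.eq_empty_or_nonempty with he | ⟨w0, hw0⟩
      · rw [he]
        simp
        positivity
      · set U : Finset V := H ∪ VCstar with hU
        have hΔpos : (0 : ℝ) < Δ := by
          rw [hΔ]
          have : (0:ℝ) < 1/ε := by positivity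
          nlinarith
        have hdegH : ∀ w ∈ H, Δ ≤ (G.degree w : ℝ) := by
          intro w hw
          have : w ∈ Vhigh := (mem_sdiff.1 hw).1
          rw [hhigh] at this
          exact (mem_filter.1 this).2
        have hnotVC : ∀ w ∈ H, w ∉ VCstar := fun w hw => (mem_sdiff.1 hw).2
        -- |U| ≥ 2
        have hw0deg : 0 < G.degree w0 := by
          have := hdegH w0 hw0
          exact_mod_cast lt_of_lt_of_le hΔpos this
        obtain ⟨u0, hu0⟩ := (G.degree_pos_iff_exists_adj w0).1 hw0deg
        have hu0VC : u0 ∈ VCstar := by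
          rcases hVCstar w0 u0 hu0 with h | h
          · exact absurd h (hnotVC w0 hw0)
          · exact h
        have hne : w0 ≠ u0 := G.ne_of_adj hu0
        have hU2 : 2 ≤ U.card := by
          have hsub : {w0, u0} ⊆ U := by
            intro x hx
            rcases mem_insert.1 hx with rfl | hx
            · exact mem_union_left _ hw0
            · rw [mem_singleton.1 hx]
              exact mem_union_right _ hu0VC
          calc 2 = ({w0, u0} : Finset V).card := by rw [card_insert_of_notMem (by simpa using hne), card_singleton]
          _ ≤ U.card := card_le_card hsub
        -- degree sum ≤ 2 * edges inside U
        set EU : Finset (Sym2 V) := G.edgeFinset.filter (fun e => ∀ v ∈ e, v ∈ U) with hEU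
        have key : ∑ w ∈ H, G.degree w ≤ 2 * EU.card := by
          set s : Finset (V × V) := (H ×ˢ Finset.univ).filter (fun p => G.Adj p.1 p.2) with hs
          have hcard : ∑ w ∈ H, G.degree w = s.card := by
            rw [Finset.card_eq_sum_card_fiberwise (f := Prod.fst) (t := H)
              (fun p hp => (Finset.mem_product.1 (Finset.mem_filter.1 hp).1).1)]
            refine Finset.sum_congr rfl fun w hw => ?_
            rw [← SimpleGraph.card_neighborFinset_eq_degree]
            apply Finset.card_bij' (fun u _ => (w, u)) (fun p _ => p.2)
            · intro u hu
              simp only [hs, Finset.mem_filter, Finset.mem_product]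
              exact ⟨⟨⟨hw, Finset.mem_univ _⟩, (SimpleGraph.mem_neighborFinset _ _ _).1 hu⟩, trivial⟩
            · intro p hp
              simp only [hs, Finset.mem_filter] at hp
              rw [SimpleGraph.mem_neighborFinset, ← hp.2]
              exact hp.1.2
            · intro u hu
              rfl
            · intro p hp
              simp only [Finset.mem_filter] at hp
              exact Prod.ext hp.2.symm rfl
          rw [hcard]
          apply Finset.card_le_mul_card_image_of_maps_to (f := fun p : V × V => s(p.1, p.2))
          · intro p hp
            simp only [hs, Finset.mem_filter, Finset.mem_product] at hp
            obtain ⟨⟨hp1, -⟩, hadj⟩ := hp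
            rw [hEU, Finset.mem_filter]
            refine ⟨SimpleGraph.mem_edgeFinset.2 hadj, ?_⟩
            intro v hv
            rcases Sym2.mem_iff.1 hv with rfl | rfl
            · exact mem_union_left _ hp1
            · rcases hVCstar p.1 p.2 hadj with h | h
              · exact absurd h (hnotVC _ hp1)
              · exact mem_union_right _ h
          · intro e he
            induction e with
            | h a b =>
              have hsub : {q ∈ s | s(q.1, q.2) = s(a, b)} ⊆ {(a, b), (b, a)} := by
                intro q hq
                rcases Sym2.eq_iff.1 (Finset.mem_filter.1 hq).2 with ⟨h1, h2⟩ | ⟨h1, h2⟩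
                · simp [Prod.ext_iff, h1, h2]
                · simp [Prod.ext_iff, h1, h2]
              calc _ ≤ ({(a, b), (b, a)} : Finset (V × V)).card := card_le_card hsub
              _ ≤ 2 := card_insert_le _ _ |>.trans (by simp)
        -- lower bound degree sum
        have hsum : Δ * (H.card : ℝ) ≤ (∑ w ∈ H, (G.degree w : ℝ)) := by
          calc Δ * (H.card : ℝ) = ∑ _w ∈ H, Δ := by rw [Finset.sum_const, nsmul_eq_mul]; ring
          _ ≤ _ := Finset.sum_le_sum hdegH
        have hsum' : (∑ w ∈ H, (G.degree w : ℝ)) ≤ 2 * (EU.card : ℝ) := by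
          have := key
          push_cast [← Nat.cast_sum]
          exact_mod_cast key
        have harbU : (EU.card : ℝ) ≤ α * ((U.card : ℝ) - 1) := harb U hU2
        have hUcard : (U.card : ℝ) ≤ (H.card : ℝ) + (VCstar.card : ℝ) := by
          have := Finset.card_union_le H VCstar
          exact_mod_cast this
        -- combine: Δ * |H| ≤ 2α(|H| + |VC*| - 1)
        have hmain : Δ * (H.card : ℝ) ≤ 2 * α * ((H.card : ℝ) + (VCstar.card : ℝ) - 1) := by
          have hα0 : (0:ℝ) < α := lt_of_lt_of_le one_pos hα
          nlinarith [hsum.trans hsum', harbU]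
        rw [hΔ] at hmain
        have hα0 : (0:ℝ) < α := lt_of_lt_of_le one_pos hα
        have e1 : (1/ε) * (2*α) * (H.card : ℝ) ≤ 2*α*((VCstar.card : ℝ) - 1) := by
          nlinarith [hmain]
        have e2 : (H.card : ℝ) ≤ ε * ((VCstar.card : ℝ) - 1) := by
          have h2 := mul_le_mul_of_nonneg_left e1 (by positivity : (0:ℝ) ≤ ε/(2*α))
          have lhs_eq : (ε/(2*α)) * ((1/ε) * (2*α) * (H.card : ℝ)) = (H.card : ℝ) := by
            field_simp
          have rhs_eq : (ε/(2*α)) * (2*α*((VCstar.card : ℝ) - 1))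
              = ε * ((VCstar.card : ℝ) - 1) := by
            field_simp
          rw [lhs_eq, rhs_eq] at h2
          exact h2
        nlinarith [e2, hε.le]
    -- put everything together
    have hsplit : (Vhigh.card : ℝ) = ((Vhigh ∩ VCstar).card : ℝ) + (H.card : ℝ) := by
      have := Finset.card_inter_add_card_sdiff Vhigh VCstar
      exact_mod_cast this.symm
    have hVCsplit : ((VCstar ∩ Vlow).card : ℝ) + ((Vhigh ∩ VCstar).card : ℝ) = (VCstar.card : ℝ) := by
      have h1 : VCstar ∩ Vlow = VCstar \ Vhigh := by
        rw [hlow]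
        ext x
        simp [mem_sdiff]
      have h2 : Vhigh ∩ VCstar = VCstar ∩ Vhigh := Finset.inter_comm _ _
      rw [h1, h2]
      have := Finset.card_sdiff_add_card_inter VCstar Vhigh
      exact_mod_cast this
    have hunion : ((VCt ∪ Vhigh).card : ℝ) ≤ (VCt.card : ℝ) + (Vhigh.card : ℝ) := by
      exact_mod_cast Finset.card_union_le VCt Vhigh
    have hVChigh_le : ((Vhigh ∩ VCstar).card : ℝ) ≤ t * ((Vhigh ∩ VCstar).card : ℝ) := by
      nlinarith [Nat.cast_nonneg (α := ℝ) (Vhigh ∩ VCstar).card]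
    nlinarith [hVCt_le, hHcard, hsplit, hVCsplit, hunion, hVChigh_le]
end

section
/- Let G be a finite simple graph on n ≥ 1 vertices with average degree at most β ≥ 1 and no isolated vertices assumed removed (so we only assume average degree at most β). Fix 0 < ε < β, t ≥ 1, and set Δ = ((β+1)/ε + 1)·β. Let V_low be the vertices of degree less than Δ and G_low = G[V_low]. If IS_t is an independent set of G_low whose size is at least 1/t times the maximum independent set size of G_low, then IS_t is an independent set of G whose size is at least 1/(t(1+ε)) times the maximum independent set size of G. -/
/-!
Every independent set `S` of `G` satisfies `|S| ≤ |S ∩ V_low| + |V_high| ≤ t·|IS_t| + |V_high|`, so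
it suffices to show `|V_high| ≤ ε·α(G_low)`. Vertices of degree `≥ Δ` use up `Δ·|V_high|` of the
degree sum `≤ β n`, leaving little for `V_low`; the Caro–Wei bound together with Cauchy–Schwarz
then gives `α(G_low) ≥ |V_low|² / (∑_{V_low} deg + |V_low|)`, and the choice of `Δ` makes this
at least `|V_high| / ε`.
-/

open Finset SimpleGraph

namespace SimpleGraph

variable {V : Type*} [Fintype V] [DecidableEq V] (G : SimpleGraph V) [DecidableRel G.Adj]

theorem sum_inv_card_inter_neighborFinset_le_of_subset {A B : Finset V} (hBA : B ⊆ A) :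
    ∑ v ∈ B, ((#(A ∩ G.neighborFinset v) : ℝ) + 1)⁻¹ ≤
      ∑ v ∈ B, ((#(B ∩ G.neighborFinset v) : ℝ) + 1)⁻¹ := by
  gcongr with v

theorem sum_inv_card_inter_neighborFinset_insert_le_one {A : Finset V} {v : V} (hv : v ∈ A)
    (hmin : ∀ u ∈ A, #(A ∩ G.neighborFinset v) ≤ #(A ∩ G.neighborFinset u)) :
    ∑ u ∈ insert v (A ∩ G.neighborFinset v), ((#(A ∩ G.neighborFinset u) : ℝ) + 1)⁻¹ ≤ 1 := by
  set d := #(A ∩ G.neighborFinset v)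
  have hcard : #(insert v (A ∩ G.neighborFinset v)) = d + 1 :=
    card_insert_of_notMem (by simp)
  calc ∑ u ∈ insert v (A ∩ G.neighborFinset v), ((#(A ∩ G.neighborFinset u) : ℝ) + 1)⁻¹
      ≤ ∑ _u ∈ insert v (A ∩ G.neighborFinset v), ((d : ℝ) + 1)⁻¹ := by
        refine sum_le_sum fun u hu => ?_
        have hu : u ∈ A := insert_subset hv inter_subset_left hu
        gcongr
        exact hmin u hu
    _ = 1 := by
        rw [sum_const, hcard, nsmul_eq_mul]
        push_cast
        exact mul_inv_cancel₀ (by positivity)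

/-- Caro–Wei bound for the subgraph induced on `A`. -/
theorem exists_indep_subset_sum_inv_le (A : Finset V) :
    ∃ W ⊆ A, (∀ u ∈ W, ∀ v ∈ W, ¬ G.Adj u v) ∧
      ∑ v ∈ A, ((#(A ∩ G.neighborFinset v) : ℝ) + 1)⁻¹ ≤ #W := by
  induction A using Finset.strongInduction with
  | _ A ih =>
  rcases A.eq_empty_or_nonempty with rfl | hA
  · exact ⟨∅, by simp⟩
  -- Greedily take a vertex of minimum degree in `A` and discard its closed neighbourhood.
  obtain ⟨v, hvA, hmin⟩ := A.exists_min_image (fun u => #(A ∩ G.neighborFinset u)) hA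
  set R := insert v (A ∩ G.neighborFinset v)
  have hRA : R ⊆ A := insert_subset hvA inter_subset_left
  have hvR : v ∈ R := mem_insert_self _ _
  obtain ⟨W, hWA, hWind, hWsum⟩ := ih (A \ R) (sdiff_ssubset hRA ⟨v, hvR⟩)
  have hnadj : ∀ u ∈ W, ¬ G.Adj v u := fun u hu hvu => by
    obtain ⟨huA, huR⟩ := mem_sdiff.1 (hWA hu)
    exact huR (mem_insert_of_mem (mem_inter.2 ⟨huA, by simpa⟩))
  have hvW : v ∉ W := fun h => (mem_sdiff.1 (hWA h)).2 hvR
  refine ⟨insert v W, insert_subset hvA (hWA.trans sdiff_subset), ?_, ?_⟩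
  · intro u hu w hw
    rcases mem_insert.1 hu with rfl | huW <;> rcases mem_insert.1 hw with rfl | hwW
    · exact G.irrefl
    · exact hnadj w hwW
    · exact fun h => hnadj u huW h.symm
    · exact hWind u huW w hwW
  · rw [← sum_sdiff hRA, card_insert_of_notMem hvW, Nat.cast_succ]
    gcongr
    · exact (G.sum_inv_card_inter_neighborFinset_le_of_subset sdiff_subset).trans hWsum
    · exact G.sum_inv_card_inter_neighborFinset_insert_le_one hvA hmin

theorem exists_indep_subset_sq_card_le (A : Finset V) :
    ∃ W ⊆ A, (∀ u ∈ W, ∀ v ∈ W, ¬ G.Adj u v) ∧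
      (#A : ℝ) ^ 2 ≤ #W * (∑ v ∈ A, (G.degree v : ℝ) + #A) := by
  obtain ⟨W, hWA, hWind, hW⟩ := G.exists_indep_subset_sum_inv_le A
  refine ⟨W, hWA, hWind, ?_⟩
  rcases A.eq_empty_or_nonempty with rfl | hA
  · simp
  have hsum : ∑ v ∈ A, (G.degree v : ℝ) + #A = ∑ v ∈ A, ((G.degree v : ℝ) + 1) := by
    simp [sum_add_distrib]
  rw [hsum, ← div_le_iff₀ (sum_pos (fun v _ => by positivity) hA)]
  -- Cauchy–Schwarz (Sedrakyan's form), then Caro–Wei.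
  calc (#A : ℝ) ^ 2 / ∑ v ∈ A, ((G.degree v : ℝ) + 1)
      ≤ ∑ v ∈ A, 1 ^ 2 / ((G.degree v : ℝ) + 1) := by
        simpa using sq_sum_div_le_sum_sq_div A (fun _ => (1 : ℝ)) (fun v _ => by positivity)
    _ ≤ ∑ v ∈ A, ((#(A ∩ G.neighborFinset v) : ℝ) + 1)⁻¹ := by
        refine sum_le_sum fun v _ => ?_
        rw [one_pow, one_div, ← card_neighborFinset_eq_degree]
        gcongr
        exact inter_subset_right
    _ ≤ #W := hW

theorem sum_degree_add_mul_card_compl_le {A : Finset V} {Δ : ℝ}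
    (hA : ∀ v ∉ A, Δ ≤ G.degree v) :
    ∑ v ∈ A, (G.degree v : ℝ) + Δ * #Aᶜ ≤ 2 * #G.edgeFinset := by
  have hsum : ∑ v ∈ A, (G.degree v : ℝ) + ∑ v ∈ Aᶜ, (G.degree v : ℝ) = 2 * #G.edgeFinset := by
    rw [sum_add_sum_compl]
    exact_mod_cast G.sum_degrees_eq_twice_card_edges
  have hcompl : Δ * #Aᶜ ≤ ∑ v ∈ Aᶜ, (G.degree v : ℝ) := by
    rw [mul_comm, ← nsmul_eq_mul, ← sum_const]
    exact sum_le_sum fun v hv => hA v (mem_compl.1 hv)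
  linarith

end SimpleGraph

/-- The arithmetic core: `x` = number of high-degree vertices, `L` = number of low-degree vertices,
`D` = their degree sum plus `L`, `w` = size of the Turán-type independent set. With
`ε Δ = (β + 1 + ε) β`, the bound reduces to a quadratic form in `(L, x)` whose discriminant is
`(β + 1)(1 - 3β) ≤ 0`. -/
theorem le_mul_of_sq_le_mul_of_degree_bound {β ε Δ L D w x : ℝ} (hβ : 1 ≤ 3 * β) (hε : 0 < ε)
    (hΔ : ε * Δ = (β + 1 + ε) * β) (hx : 0 ≤ x) (hw : 0 ≤ w) (hL : 0 ≤ L) (hLD : L ≤ D)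
    (hD : D + Δ * x ≤ β * (L + x) + L) (hLw : L ^ 2 ≤ w * D) :
    x ≤ ε * w := by
  rcases (hL.trans hLD).eq_or_lt with rfl | hD0
  · obtain rfl : L = 0 := by linarith
    have hΔβ : 0 < Δ - β := by nlinarith
    have : x ≤ 0 := le_of_mul_le_mul_left (by linarith) hΔβ
    nlinarith
  · have hquad : 0 ≤ ε ^ 2 * L ^ 2 - ε * (β + 1) * x * L + β * (β + 1) * x ^ 2 := by
      have key : 4 * (β * (β + 1)) * (ε ^ 2 * L ^ 2 - ε * (β + 1) * x * L + β * (β + 1) * x ^ 2)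
          = (2 * β * (β + 1) * x - ε * (β + 1) * L) ^ 2 + (β + 1) * (3 * β - 1) * (ε * L) ^ 2 := by
        ring
      have : 0 ≤ (β + 1) * (3 * β - 1) * (ε * L) ^ 2 := by
        apply mul_nonneg (mul_nonneg _ _) (sq_nonneg _) <;> linarith
      refine (mul_nonneg_iff_of_pos_left (by nlinarith : 0 < 4 * (β * (β + 1)))).mp ?_
      rw [key]
      exact add_nonneg (sq_nonneg _) this
    have : ε * D * x ≤ ε * D * (ε * w) := by
      calc ε * D * x ≤ ε * x * (β * (L + x) + L - Δ * x) := by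
            rw [mul_right_comm]; gcongr; linarith
        _ = ε * (β + 1) * x * L - β * (β + 1) * x ^ 2 := by linear_combination (-x ^ 2) * hΔ
        _ ≤ ε ^ 2 * L ^ 2 := by linarith
        _ ≤ ε * D * (ε * w) := by nlinarith
    exact le_of_mul_le_mul_left this (by positivity)

theorem stmt_7_general {V : Type*} [Fintype V] [DecidableEq V]
    (G : SimpleGraph V) [DecidableRel G.Adj]
    (β ε t Δ : ℝ) (hβ : 1 ≤ β) (hε0 : 0 < ε)
    (hΔ : Δ = ((β + 1) / ε + 1) * β)
    (havg : 2 * (G.edgeFinset.card : ℝ) ≤ β * (Fintype.card V : ℝ))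
    (Vlow : Finset V) (hlow : Vlow = Finset.univ.filter fun v => (G.degree v : ℝ) < Δ)
    -- IS_t is a t-approximate maximum independent set of G_low = G[V_low]
    (ISt : Finset V)
    (hISindep : ∀ u ∈ ISt, ∀ v ∈ ISt, ¬ G.Adj u v)
    (hISapx : ∀ S : Finset V, S ⊆ Vlow → (∀ u ∈ S, ∀ v ∈ S, ¬ G.Adj u v) →
      (S.card : ℝ) ≤ t * (ISt.card : ℝ)) :
    (∀ u ∈ ISt, ∀ v ∈ ISt, ¬ G.Adj u v) ∧
    (∀ S : Finset V, (∀ u ∈ S, ∀ v ∈ S, ¬ G.Adj u v) →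
      (S.card : ℝ) ≤ t * (1 + ε) * (ISt.card : ℝ)) := by
  refine ⟨hISindep, fun S hS => ?_⟩
  have hhigh : ∀ v ∉ Vlow, Δ ≤ G.degree v := by simp [hlow]
  obtain ⟨W, hWlow, hWind, hW⟩ := G.exists_indep_subset_sq_card_le Vlow
  have hcard : (#Vlow : ℝ) + #Vlowᶜ = Fintype.card V := by
    exact_mod_cast card_add_card_compl Vlow
  have hhigh_le : (#Vlowᶜ : ℝ) ≤ ε * #W :=
    le_mul_of_sq_le_mul_of_degree_bound (β := β) (Δ := Δ) (by linarith) hε0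
      (by rw [hΔ]; field_simp) (by positivity) (by positivity) (by positivity)
      (le_add_of_nonneg_left (sum_nonneg fun v _ => by positivity))
      (by rw [hcard]; linarith [G.sum_degree_add_mul_card_compl_le hhigh]) hW
  have hlow_le : (#(S ∩ Vlow) : ℝ) ≤ t * #ISt := hISapx _ inter_subset_right
    fun u hu v hv => hS u (mem_inter.1 hu).1 v (mem_inter.1 hv).1
  have hsplit : #S ≤ #(S ∩ Vlow) + #Vlowᶜ := by
    rw [← card_inter_add_card_sdiff S Vlow, sdiff_eq_inter_compl]
    exact Nat.add_le_add_left (card_le_card inter_subset_right) _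
  calc (#S : ℝ) ≤ #(S ∩ Vlow) + #Vlowᶜ := by exact_mod_cast hsplit
    _ ≤ t * #ISt + ε * (t * #ISt) :=
        add_le_add hlow_le (hhigh_le.trans (by gcongr; exact hISapx W hWlow hWind))
    _ = t * (1 + ε) * #ISt := by ring

theorem stmt_7 {V : Type*} [Fintype V] [DecidableEq V] [Nonempty V]
    (G : SimpleGraph V) [DecidableRel G.Adj]
    (β ε t Δ : ℝ) (hβ : 1 ≤ β) (hε0 : 0 < ε) (hεβ : ε < β) (ht : 1 ≤ t)
    (hΔ : Δ = ((β + 1) / ε + 1) * β)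
    (havg : 2 * (G.edgeFinset.card : ℝ) ≤ β * (Fintype.card V : ℝ))
    (Vlow : Finset V) (hlow : Vlow = Finset.univ.filter fun v => (G.degree v : ℝ) < Δ)
    -- IS_t is a t-approximate maximum independent set of G_low = G[V_low]
    (ISt : Finset V) (hISsub : ISt ⊆ Vlow)
    (hISindep : ∀ u ∈ ISt, ∀ v ∈ ISt, ¬ G.Adj u v)
    (hISapx : ∀ S : Finset V, S ⊆ Vlow → (∀ u ∈ S, ∀ v ∈ S, ¬ G.Adj u v) →
      (S.card : ℝ) ≤ t * (ISt.card : ℝ)) :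
    (∀ u ∈ ISt, ∀ v ∈ ISt, ¬ G.Adj u v) ∧
    (∀ S : Finset V, (∀ u ∈ S, ∀ v ∈ S, ¬ G.Adj u v) →
      (S.card : ℝ) ≤ t * (1 + ε) * (ISt.card : ℝ)) :=
  stmt_7_general G β ε t Δ hβ hε0 hΔ havg Vlow hlow ISt hISindep hISapx
end

section
/- Let G be a finite simple graph with average degree at most β ≥ 1, let 0 < ε < β, and set Δ = ((β+1)/ε + 1)·β. Let V_high be the vertices of degree at least Δ and V_low the remainder, and suppose V_low is nonempty. Then the average degree of the induced subgraph G_low = G[V_low] is at most β. -/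
open Finset SimpleGraph

theorem stmt_9 {V : Type*} [Fintype V] [DecidableEq V]
    (G : SimpleGraph V) [DecidableRel G.Adj]
    (β ε Δ : ℝ) (hβ : 1 ≤ β) (hε0 : 0 < ε) (hεβ : ε < β)
    (hΔ : Δ = ((β + 1) / ε + 1) * β)
    (havg : 2 * (G.edgeFinset.card : ℝ) ≤ β * (Fintype.card V : ℝ))
    (Vhigh Vlow : Finset V)
    (hhigh : Vhigh = Finset.univ.filter fun v => Δ ≤ (G.degree v : ℝ))
    (hlow : Vlow = Finset.univ \ Vhigh)
    (hne : Vlow.Nonempty) :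
    2 * ((G.edgeFinset.filter fun e => ∀ v ∈ e, v ∈ Vlow).card : ℝ) ≤ β * (Vlow.card : ℝ) := by
  set F := G.edgeFinset.filter fun e => ∀ v ∈ e, v ∈ Vlow with hF
  -- each edge of F has exactly 2 endpoints in Vlow
  have hcard2 : ∀ e ∈ F, (Vlow.filter fun v => v ∈ e).card = 2 := by
    intro e he
    simp only [hF, Finset.mem_filter, SimpleGraph.mem_edgeFinset] at he
    obtain ⟨hes, hall⟩ := he
    induction e with
    | h a b =>
      have hadj : G.Adj a b := hes
      have hab : a ≠ b := hadj.ne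
      have ha : a ∈ Vlow := hall a (by simp)
      have hb : b ∈ Vlow := hall b (by simp)
      have : Vlow.filter (fun v => v ∈ s(a, b)) = {a, b} := by
        ext v
        simp only [Finset.mem_filter, Sym2.mem_iff, Finset.mem_insert,
          Finset.mem_singleton]
        constructor
        · rintro ⟨_, h | h⟩ <;> tauto
        · rintro (rfl | rfl) <;> simp [ha, hb]
      rw [this, Finset.card_insert_of_notMem (by simp [hab]),
        Finset.card_singleton]
  -- double counting
  have hswap : ∑ e ∈ F, (Vlow.filter fun v => v ∈ e).card
      = ∑ v ∈ Vlow, (F.filter fun e => v ∈ e).card := by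
    simp only [Finset.card_filter]
    exact Finset.sum_comm
  have hA : 2 * F.card ≤ ∑ v ∈ Vlow, G.degree v := by
    have h1 : ∀ v ∈ Vlow, (F.filter fun e => v ∈ e).card ≤ G.degree v := by
      intro v hv
      rw [← G.card_incidenceFinset_eq_degree, G.incidenceFinset_eq_filter]
      refine Finset.card_le_card ?_
      intro e he
      simp only [hF, Finset.mem_filter] at he ⊢
      exact ⟨he.1.1, he.2⟩
    calc 2 * F.card = ∑ e ∈ F, (Vlow.filter fun v => v ∈ e).card := by
          rw [Finset.sum_congr rfl hcard2, Finset.sum_const, smul_eq_mul,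
            mul_comm]
      _ = ∑ v ∈ Vlow, (F.filter fun e => v ∈ e).card := hswap
      _ ≤ ∑ v ∈ Vlow, G.degree v := Finset.sum_le_sum h1
  -- total degree sum
  have hsub : Vhigh ⊆ Finset.univ := Finset.subset_univ _
  have hsplit : ∑ v ∈ Vlow, G.degree v + ∑ v ∈ Vhigh, G.degree v
      = 2 * G.edgeFinset.card := by
    rw [hlow, Finset.sum_sdiff hsub, ← SimpleGraph.sum_degrees_eq_twice_card_edges]
  -- high vertices
  have hC : Δ * (Vhigh.card : ℝ) ≤ ∑ v ∈ Vhigh, (G.degree v : ℝ) := by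
    have := Finset.card_nsmul_le_sum Vhigh (fun v => (G.degree v : ℝ)) Δ
      (fun v hv => by
        rw [hhigh] at hv
        exact (Finset.mem_filter.mp hv).2)
    simpa [nsmul_eq_mul, mul_comm] using this
  have hβΔ : β ≤ Δ := by
    rw [hΔ]
    nlinarith [div_nonneg (by linarith : (0:ℝ) ≤ β + 1) hε0.le]
  have hn : (Vlow.card : ℝ) + (Vhigh.card : ℝ) = (Fintype.card V : ℝ) := by
    rw [hlow]
    rw [Finset.card_sdiff_of_subset hsub]
    have hle : Vhigh.card ≤ Finset.univ.card := Finset.card_le_card hsub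
    rw [Nat.cast_sub hle]
    simp [Finset.card_univ]
  -- assemble in ℝ
  have hAR : 2 * (F.card : ℝ) ≤ ∑ v ∈ Vlow, (G.degree v : ℝ) := by
    have := hA
    push_cast
    exact_mod_cast by exact_mod_cast this
  have hsplitR : ∑ v ∈ Vlow, (G.degree v : ℝ) + ∑ v ∈ Vhigh, (G.degree v : ℝ)
      = 2 * (G.edgeFinset.card : ℝ) := by
    exact_mod_cast congrArg (Nat.cast : ℕ → ℝ) hsplit
  have hh0 : (0:ℝ) ≤ (Vhigh.card : ℝ) := Nat.cast_nonneg _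
  have hbh : β * (Vhigh.card : ℝ) ≤ Δ * (Vhigh.card : ℝ) :=
    mul_le_mul_of_nonneg_right hβΔ hh0
  have hmul : β * (Fintype.card V : ℝ)
      = β * (Vlow.card : ℝ) + β * (Vhigh.card : ℝ) := by
    rw [← hn]; ring
  linarith
end

section
/- Let G be a bipartite graph with sides U and Γ such that the arboricity of G is at most α (every vertex subset S with |S| ≥ 2 spans at most α(|S|−1) edges) and every vertex of U has degree at least (5/ε + 1)·2α for some 0 < ε ≤ 1. Then G contains a matching that covers every vertex of U. -/
open Finset SimpleGraph

/-! Every subset of one side of a bipartite graph is independent, so a set `W ⊆ U` of vertices of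
degree at least `2α` is incident to at least `2α|W|` distinct edges, all with both ends in
`W ∪ N(W)`. Sparsity allows at most `α(|W| + |N(W)| - 1)` edges there, whence `|W| < |N(W)|`,
and Hall's theorem gives a matching covering `U`. -/

namespace SimpleGraph

variable {V : Type*} {G : SimpleGraph V}

lemma IsBipartiteWith.isIndepSet_left {s t : Set V} (h : G.IsBipartiteWith s t) :
    G.IsIndepSet s := fun _ hu _ hv _ hadj ↦ by
  rcases h.mem_of_adj hadj with ⟨-, hv'⟩ | ⟨hu', -⟩
  · exact h.disjoint.notMem_of_mem_left hv hv'
  · exact h.disjoint.notMem_of_mem_left hu hu'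

variable [Fintype V] [DecidableEq V] [DecidableRel G.Adj]

variable (G) in
def edgesWithin (S : Finset V) : Finset (Sym2 V) :=
  G.edgeFinset.filter fun e ↦ ∀ v ∈ e, v ∈ S

lemma disjoint_biUnion_neighborFinset_of_isIndepSet {W : Finset V} (hW : G.IsIndepSet W) :
    Disjoint W (W.biUnion (G.neighborFinset ·)) := by
  simp only [Finset.disjoint_left, Finset.mem_biUnion, mem_neighborFinset, not_exists, not_and]
  exact fun v hv w hw hadj ↦ hW hw hv hadj.ne hadj

lemma incidenceFinset_subset_edgesWithin {W : Finset V} {w : V} (hw : w ∈ W) :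
    G.incidenceFinset w ⊆ G.edgesWithin (W ∪ W.biUnion (G.neighborFinset ·)) := by
  intro e he
  rw [mem_incidenceFinset] at he
  refine mem_filter.mpr ⟨mem_edgeFinset.mpr he.1, fun v hv ↦ ?_⟩
  obtain rfl | hne := eq_or_ne w v
  · exact mem_union_left _ hw
  · have hadj : G.Adj w v := by
      rw [← mem_edgeSet, ← (Sym2.mem_and_mem_iff hne).mp ⟨he.2, hv⟩]
      exact he.1
    exact mem_union_right _ (mem_biUnion.mpr ⟨w, hw, (mem_neighborFinset ..).mpr hadj⟩)

lemma sum_degree_le_card_edgesWithin {W : Finset V} (hW : G.IsIndepSet W) :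
    ∑ w ∈ W, G.degree w ≤ #(G.edgesWithin (W ∪ W.biUnion (G.neighborFinset ·))) := by
  have hdisj : (W : Set V).PairwiseDisjoint (G.incidenceFinset ·) := fun u hu v hv hne ↦ by
    simpa [incidenceFinset, Set.disjoint_toFinset, Set.disjoint_iff_inter_eq_empty] using
      G.incidenceSet_inter_incidenceSet_of_not_adj (hW hu hv hne) hne
  calc ∑ w ∈ W, G.degree w = #(W.biUnion (G.incidenceFinset ·)) := by
        simp only [card_biUnion hdisj, card_incidenceFinset_eq_degree]
    _ ≤ _ := card_le_card (biUnion_subset.mpr fun _ hw ↦ incidenceFinset_subset_edgesWithin hw)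

lemma card_lt_card_biUnion_neighborFinset {α : ℝ} (hα : 0 < α)
    (hsparse : ∀ S : Finset V, 2 ≤ #S → (#(G.edgesWithin S) : ℝ) ≤ α * (#S - 1))
    {W : Finset V} (hW : G.IsIndepSet W) (hWne : W.Nonempty)
    (hdeg : ∀ w ∈ W, 2 * α ≤ G.degree w) :
    #W < #(W.biUnion (G.neighborFinset ·)) := by
  set N := W.biUnion (G.neighborFinset ·)
  have hNne : N.Nonempty := by
    obtain ⟨w, hw⟩ := hWne
    have hpos : 0 < G.degree w := by
      exact_mod_cast (by linarith [hdeg w hw] : (0 : ℝ) < G.degree w)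
    obtain ⟨x, hx⟩ := card_pos.mp ((card_neighborFinset_eq_degree G w).symm ▸ hpos)
    exact ⟨x, mem_biUnion.mpr ⟨w, hw, hx⟩⟩
  have hcard : #(W ∪ N) = #W + #N :=
    card_union_of_disjoint (disjoint_biUnion_neighborFinset_of_isIndepSet hW)
  have hcard2 : 2 ≤ #(W ∪ N) := by
    rw [hcard]; linarith [hWne.card_pos, hNne.card_pos]
  have key : #W * (2 * α) ≤ α * (#W + #N - 1) := calc
    #W * (2 * α) ≤ ∑ w ∈ W, (G.degree w : ℝ) := by
      simpa using card_nsmul_le_sum W (fun w ↦ (G.degree w : ℝ)) _ hdeg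
    _ ≤ #(G.edgesWithin (W ∪ N)) := by
      exact_mod_cast sum_degree_le_card_edgesWithin hW
    _ ≤ α * (#W + #N - 1) := by
      simpa only [hcard, Nat.cast_add] using hsparse _ hcard2
  have hgap : (#W : ℝ) + 1 ≤ #N := le_of_mul_le_mul_left (by linarith) hα
  exact_mod_cast (by linarith : (#W : ℝ) < #N)

lemma IsBipartiteWith.exists_isMatching_of_forall_card_le {U : Finset V} {t : Set V}
    (h : G.IsBipartiteWith U t) (hall : ∀ W ⊆ U, #W ≤ #(W.biUnion (G.neighborFinset ·))) :
    ∃ M : G.Subgraph, (U : Set V) ⊆ M.verts ∧ M.IsMatching := by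
  refine exists_isMatching_of_forall_ncard_le h fun s hs ↦ ?_
  lift s to Finset V using U.finite_toSet.subset hs
  have hN : ⋃ x ∈ (s : Set V), G.neighborSet x = ↑(s.biUnion (G.neighborFinset ·)) := by
    ext; simp
  rw [hN, Set.ncard_coe_finset, Set.ncard_coe_finset]
  exact hall s (by exact_mod_cast hs)

end SimpleGraph

theorem stmt_11_general {V : Type*} [Fintype V] [DecidableEq V]
    (G : SimpleGraph V) [DecidableRel G.Adj]
    (α ε : ℝ) (hα : 1 ≤ α) (hε0 : 0 < ε)
    (U Γ : Finset V) (hdisj : Disjoint U Γ)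
    -- G is bipartite with sides U and Γ
    (hbip : ∀ u v : V, G.Adj u v → (u ∈ U ∧ v ∈ Γ) ∨ (u ∈ Γ ∧ v ∈ U))
    -- arboricity at most α
    (harb : ∀ S : Finset V, 2 ≤ S.card →
      ((G.edgeFinset.filter fun e => ∀ v ∈ e, v ∈ S).card : ℝ) ≤ α * ((S.card : ℝ) - 1))
    -- every vertex of U has degree at least (5/ε + 1)·2α
    (hdeg : ∀ u ∈ U, (5 / ε + 1) * (2 * α) ≤ (G.degree u : ℝ)) :
    ∃ M : G.Subgraph, M.IsMatching ∧ ∀ u ∈ U, u ∈ M.verts := by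
  have hα0 : 0 < α := by linarith
  have hbw : G.IsBipartiteWith U Γ :=
    ⟨by exact_mod_cast hdisj, fun u v huv ↦ by exact_mod_cast hbip u v huv⟩
  have hdeg' : ∀ u ∈ U, 2 * α ≤ G.degree u := fun u hu ↦
    (le_mul_of_one_le_left (by positivity) (by linarith [show 0 ≤ 5 / ε by positivity])).trans
      (hdeg u hu)
  obtain ⟨M, hUM, hM⟩ := hbw.exists_isMatching_of_forall_card_le fun W hW ↦ by
    obtain rfl | hWne := W.eq_empty_or_nonempty
    · simp
    exact (card_lt_card_biUnion_neighborFinset hα0 harb (hbw.isIndepSet_left.mono hW) hWne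
      fun w hw ↦ hdeg' w (hW hw)).le
  exact ⟨M, hM, fun u hu ↦ hUM hu⟩

theorem stmt_11 {V : Type*} [Fintype V] [DecidableEq V]
    (G : SimpleGraph V) [DecidableRel G.Adj]
    (α ε : ℝ) (hα : 1 ≤ α) (hε0 : 0 < ε) (hε1 : ε ≤ 1)
    (U Γ : Finset V) (hdisj : Disjoint U Γ)
    -- G is bipartite with sides U and Γ
    (hbip : ∀ u v : V, G.Adj u v → (u ∈ U ∧ v ∈ Γ) ∨ (u ∈ Γ ∧ v ∈ U))
    -- arboricity at most α
    (harb : ∀ S : Finset V, 2 ≤ S.card →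
      ((G.edgeFinset.filter fun e => ∀ v ∈ e, v ∈ S).card : ℝ) ≤ α * ((S.card : ℝ) - 1))
    -- every vertex of U has degree at least (5/ε + 1)·2α
    (hdeg : ∀ u ∈ U, (5 / ε + 1) * (2 * α) ≤ (G.degree u : ℝ)) :
    ∃ M : G.Subgraph, M.IsMatching ∧ ∀ u ∈ U, u ∈ M.verts :=
  stmt_11_general G α ε hα hε0 U Γ hdisj hbip harb hdeg
end

section
/- Let G be a finite simple graph with arboricity at most α, let 0 < ε ≤ 1, and set Δ = 5(5/ε + 1)·2α. Let V_high be the vertices of degree at least Δ, let V_in ⊆ V_high be the vertices with at least 2Δ/5 neighbors inside V_high, and let V_out = V_high \ V_in. Then |V_in| ≤ (ε/10)·|V_out|. -/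
/-!
Every vertex of `V_in` sends at least `2Δ/5` edges into `V_high`, so double counting the edges
of `G[V_high]` and bounding their number by arboricity gives `|V_in| · 2Δ/5 ≤ 2α |V_high|`.
Since `2Δ/5 = 4α (5/ε + 1)` and `|V_high| = |V_in| + |V_out|`, this rearranges to
`(10/ε + 1) |V_in| ≤ |V_out|`.
-/

open Finset SimpleGraph

namespace SimpleGraph

/-- The subgraph of `G` induced on `S`, kept on the full vertex type. -/
def inducedOn {V : Type*} (G : SimpleGraph V) (S : Finset V) : SimpleGraph V where
  Adj u v := G.Adj u v ∧ u ∈ S ∧ v ∈ S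
  symm := ⟨fun _ _ h => ⟨h.1.symm, h.2.2, h.2.1⟩⟩
  loopless := ⟨fun _ h => G.irrefl h.1⟩

@[simp]
lemma inducedOn_adj {V : Type*} {G : SimpleGraph V} {S : Finset V} {u v : V} :
    (G.inducedOn S).Adj u v ↔ G.Adj u v ∧ u ∈ S ∧ v ∈ S :=
  Iff.rfl

variable {V : Type*} [Fintype V] [DecidableEq V] (G : SimpleGraph V) [DecidableRel G.Adj]

instance (S : Finset V) : DecidableRel (G.inducedOn S).Adj :=
  fun u v => inferInstanceAs (Decidable (G.Adj u v ∧ u ∈ S ∧ v ∈ S))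

lemma neighborFinset_inducedOn {S : Finset V} {v : V} (hv : v ∈ S) :
    (G.inducedOn S).neighborFinset v = G.neighborFinset v ∩ S := by
  ext w
  simp [hv]

lemma edgeFinset_inducedOn (S : Finset V) :
    (G.inducedOn S).edgeFinset = G.edgeFinset.filter fun e => ∀ v ∈ e, v ∈ S := by
  ext e
  induction e using Sym2.ind
  simp [and_comm]

lemma sum_card_neighborFinset_inter (S : Finset V) :
    ∑ v ∈ S, #(G.neighborFinset v ∩ S) = 2 * #(G.edgeFinset.filter fun e => ∀ v ∈ e, v ∈ S) := by
  rw [← edgeFinset_inducedOn, ← sum_degrees_eq_twice_card_edges]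
  have hdeg_out : ∀ v ∈ univ, v ∉ S → (G.inducedOn S).degree v = 0 := fun v _ hv => by
    rw [← card_neighborFinset_eq_degree, card_eq_zero]
    ext w
    simp [hv]
  rw [← sum_subset (subset_univ S) hdeg_out]
  refine sum_congr rfl fun v hv => ?_
  rw [← card_neighborFinset_eq_degree, neighborFinset_inducedOn G hv]

lemma sum_card_neighborFinset_inter_le {α : ℝ} (hα : 0 ≤ α) {S : Finset V}
    (harb : 2 ≤ #S → (#(G.edgeFinset.filter fun e => ∀ v ∈ e, v ∈ S) : ℝ) ≤ α * (#S - 1)) :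
    ∑ v ∈ S, (#(G.neighborFinset v ∩ S) : ℝ) ≤ 2 * α * #S := by
  rcases le_or_gt 2 #S with hS | hS
  · have hsum := congrArg (Nat.cast : ℕ → ℝ) (G.sum_card_neighborFinset_inter S)
    push_cast at hsum
    linarith [harb hS]
  · have hempty : ∀ v ∈ S, G.neighborFinset v ∩ S = ∅ := fun v hv => by
      ext w
      simp only [mem_inter, mem_neighborFinset, notMem_empty, iff_false, not_and]
      exact fun hvw hw => G.ne_of_adj hvw (card_le_one.1 (by omega) v hv w hw)
    rw [sum_congr rfl fun v hv => by rw [hempty v hv]]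
    simp only [card_empty, Nat.cast_zero, sum_const_zero]
    positivity

lemma card_mul_le_of_le_card_neighborFinset_inter {α d : ℝ} (hα : 0 ≤ α) {S T : Finset V}
    (harb : 2 ≤ #S → (#(G.edgeFinset.filter fun e => ∀ v ∈ e, v ∈ S) : ℝ) ≤ α * (#S - 1))
    (hTS : T ⊆ S) (hT : ∀ v ∈ T, d ≤ #(G.neighborFinset v ∩ S)) :
    #T * d ≤ 2 * α * #S :=
  calc #T * d = #T • d := (nsmul_eq_mul _ _).symm
    _ ≤ ∑ v ∈ T, (#(G.neighborFinset v ∩ S) : ℝ) := card_nsmul_le_sum _ _ _ hT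
    _ ≤ ∑ v ∈ S, (#(G.neighborFinset v ∩ S) : ℝ) :=
      sum_le_sum_of_subset_of_nonneg hTS fun _ _ _ => Nat.cast_nonneg _
    _ ≤ 2 * α * #S := G.sum_card_neighborFinset_inter_le hα harb

end SimpleGraph

theorem stmt_12_general {V : Type*} [Fintype V] [DecidableEq V]
    (G : SimpleGraph V) [DecidableRel G.Adj]
    (α ε Δ : ℝ) (hα : 1 ≤ α) (hε0 : 0 < ε)
    (hΔ : Δ = 5 * (5 / ε + 1) * (2 * α))
    -- arboricity at most α
    (harb : ∀ S : Finset V, 2 ≤ S.card →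
      ((G.edgeFinset.filter fun e => ∀ v ∈ e, v ∈ S).card : ℝ) ≤ α * ((S.card : ℝ) - 1))
    (Vhigh Vin Vout : Finset V)
    (hin : Vin = Vhigh.filter fun v => 2 * Δ / 5 ≤ ((G.neighborFinset v ∩ Vhigh).card : ℝ))
    (hout : Vout = Vhigh \ Vin) :
    (Vin.card : ℝ) ≤ ε / 10 * (Vout.card : ℝ) := by
  have hsub : Vin ⊆ Vhigh := hin ▸ filter_subset _ _
  have hcard : (#Vhigh : ℝ) = #Vin + #Vout := by
    rw [hout, ← card_sdiff_add_card_eq_card hsub]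
    push_cast
    ring
  have hcount : #Vin * (2 * Δ / 5) ≤ 2 * α * #Vhigh :=
    G.card_mul_le_of_le_card_neighborFinset_inter (by linarith) (harb Vhigh) hsub
      fun v hv => by rw [hin, mem_filter] at hv; exact hv.2
  have hαpos : 0 < 2 * α := by linarith
  have hratio : (10 / ε + 1) * #Vin ≤ #Vout := by
    refine le_of_mul_le_mul_left ?_ hαpos
    have hexpand : (#Vin : ℝ) * (2 * Δ / 5) = 2 * α * ((10 / ε + 1) * #Vin) + 2 * α * #Vin := by
      rw [hΔ]
      ring
    rw [hexpand, hcard] at hcount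
    linarith
  calc (#Vin : ℝ) = ε / 10 * (10 / ε * #Vin) := by field_simp
    _ ≤ ε / 10 * #Vout := by gcongr; linarith [(#Vin).cast_nonneg (α := ℝ)]

theorem stmt_12 {V : Type*} [Fintype V] [DecidableEq V]
    (G : SimpleGraph V) [DecidableRel G.Adj]
    (α ε Δ : ℝ) (hα : 1 ≤ α) (hε0 : 0 < ε) (hε1 : ε ≤ 1)
    (hΔ : Δ = 5 * (5 / ε + 1) * (2 * α))
    -- arboricity at most α
    (harb : ∀ S : Finset V, 2 ≤ S.card →
      ((G.edgeFinset.filter fun e => ∀ v ∈ e, v ∈ S).card : ℝ) ≤ α * ((S.card : ℝ) - 1))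
    (Vhigh Vin Vout : Finset V)
    (hhigh : Vhigh = Finset.univ.filter fun v => Δ ≤ (G.degree v : ℝ))
    (hin : Vin = Vhigh.filter fun v => 2 * Δ / 5 ≤ ((G.neighborFinset v ∩ Vhigh).card : ℝ))
    (hout : Vout = Vhigh \ Vin) :
    (Vin.card : ℝ) ≤ ε / 10 * (Vout.card : ℝ) :=
  stmt_12_general G α ε Δ hα hε0 hΔ harb Vhigh Vin Vout hin hout
end

section
/- Let G be a finite simple graph with arboricity at most α, let 0 < ε ≤ 1, set Δ = 5(5/ε + 1)·2α, and define V_high, V_in, V_out as in the matching sparsifier proof (V_high the vertices of degree ≥ Δ; V_in those in V_high with ≥ 2Δ/5 neighbors in V_high; V_out = V_high \ V_in). Suppose each vertex of degree < Δ marks all incident edges and each vertex of V_high marks exactly Δ incident edges, and G_Δ consists of edges marked by both endpoints. Then every vertex of V_out has more than 3Δ/5 neighbors in G_Δ that lie in V_low = V(G) \ V_high. -/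
open Finset SimpleGraph

theorem stmt_16 {V : Type*} [Fintype V] [DecidableEq V]
    (G : SimpleGraph V) [DecidableRel G.Adj]
    (α ε : ℝ) (hα : 1 ≤ α) (hε0 : 0 < ε) (hε1 : ε ≤ 1)
    (Δ : ℕ) (hΔ : 5 * (5 / ε + 1) * (2 * α) ≤ (Δ : ℝ))
    -- arboricity at most α
    (harb : ∀ S : Finset V, 2 ≤ S.card →
      ((G.edgeFinset.filter fun e => ∀ v ∈ e, v ∈ S).card : ℝ) ≤ α * ((S.card : ℝ) - 1))
    (Vhigh Vlow Vin Vout : Finset V)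
    (hhigh : Vhigh = Finset.univ.filter fun v => Δ ≤ G.degree v)
    (hlowdef : Vlow = Finset.univ \ Vhigh)
    (hin : Vin = Vhigh.filter fun v =>
      2 * (Δ : ℝ) / 5 ≤ ((G.neighborFinset v ∩ Vhigh).card : ℝ))
    (hout : Vout = Vhigh \ Vin)
    -- each vertex marks incident edges: low-degree vertices mark all,
    -- high-degree vertices mark exactly Δ
    (M : V → Finset (Sym2 V))
    (hMinc : ∀ v : V, M v ⊆ G.incidenceFinset v)
    (hMlow : ∀ v : V, G.degree v < Δ → M v = G.incidenceFinset v)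
    (hMhigh : ∀ v : V, Δ ≤ G.degree v → (M v).card = Δ) :
    -- every vertex of V_out has more than 3Δ/5 G_Δ-neighbors in V_low
    ∀ v ∈ Vout,
      3 * (Δ : ℝ) / 5 <
        ((Finset.univ.filter fun u =>
          G.Adj v u ∧ s(v, u) ∈ M v ∧ s(v, u) ∈ M u ∧ u ∈ Vlow).card : ℝ) := by
  intro v hv
  rw [hout, Finset.mem_sdiff, hin] at hv
  obtain ⟨hvh, hvnin⟩ := hv
  have hvdeg : Δ ≤ G.degree v := by
    rw [hhigh, Finset.mem_filter] at hvh; exact hvh.2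
  have hnhigh : ((G.neighborFinset v ∩ Vhigh).card : ℝ) < 2 * (Δ : ℝ) / 5 := by
    by_contra h
    exact hvnin (Finset.mem_filter.mpr ⟨hvh, le_of_not_gt h⟩)
  -- the set of neighbors u with s(v,u) ∈ M v
  set T := (G.neighborFinset v).filter (fun u => s(v, u) ∈ M v) with hT
  have hMvT : M v = T.image (fun u => s(v, u)) := by
    apply Finset.Subset.antisymm
    · intro e he
      have hinc : e ∈ G.incidenceFinset v := hMinc v he
      rw [SimpleGraph.mem_incidenceFinset, SimpleGraph.incidenceSet] at hinc
      obtain ⟨hedge, hvm⟩ := hinc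
      have hspec := Sym2.other_spec hvm
      have hadj : G.Adj v (Sym2.Mem.other hvm) := by
        rw [← SimpleGraph.mem_edgeSet, hspec]; exact hedge
      refine Finset.mem_image.mpr ⟨Sym2.Mem.other hvm, ?_, hspec⟩
      rw [hT, Finset.mem_filter, SimpleGraph.mem_neighborFinset]
      exact ⟨hadj, by rwa [hspec]⟩
    · intro e he
      obtain ⟨u, hu, rfl⟩ := Finset.mem_image.mp he
      exact (Finset.mem_filter.mp hu).2
  have hinj : ∀ a ∈ T, ∀ b ∈ T, s(v, a) = s(v, b) → a = b := by
    intro a _ b _ h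
    exact Sym2.congr_right.mp h
  have hTcard : T.card = Δ := by
    rw [← hMhigh v hvdeg, hMvT, Finset.card_image_of_injOn hinj]
  -- partition T into Vlow and non-Vlow parts
  set A := T.filter (fun u => u ∈ Vlow) with hA
  set B := T.filter (fun u => u ∉ Vlow) with hB
  have hpart : A.card + B.card = Δ := by
    rw [hA, hB, Finset.card_filter_add_card_filter_not, hTcard]
  have hBsub : B ⊆ G.neighborFinset v ∩ Vhigh := by
    intro u hu
    rw [hB, Finset.mem_filter] at hu
    obtain ⟨huT, hunl⟩ := hu
    have h1 : u ∈ G.neighborFinset v := (Finset.mem_filter.mp huT).1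
    have h2 : u ∈ Vhigh := by
      by_contra h
      exact hunl (by rw [hlowdef, Finset.mem_sdiff]; exact ⟨Finset.mem_univ u, h⟩)
    exact Finset.mem_inter.mpr ⟨h1, h2⟩
  have hBcard : (B.card : ℝ) < 2 * (Δ : ℝ) / 5 :=
    lt_of_le_of_lt (by exact_mod_cast Finset.card_le_card hBsub) hnhigh
  -- the target set equals A
  have hset : (Finset.univ.filter fun u =>
      G.Adj v u ∧ s(v, u) ∈ M v ∧ s(v, u) ∈ M u ∧ u ∈ Vlow) = A := by
    ext u
    simp only [hA, hT, Finset.mem_filter, Finset.mem_univ, true_and,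
      SimpleGraph.mem_neighborFinset, and_assoc]
    constructor
    · rintro ⟨h1, h2, _, h4⟩; exact ⟨h1, h2, h4⟩
    · rintro ⟨h1, h2, h4⟩
      refine ⟨h1, h2, ?_, h4⟩
      have hudeg : G.degree u < Δ := by
        rw [hlowdef, Finset.mem_sdiff, hhigh, Finset.mem_filter] at h4
        have h5 := h4.2
        push_neg at h5
        exact h5 (Finset.mem_univ u)
      rw [hMlow u hudeg, SimpleGraph.mem_incidenceFinset]
      rw [Sym2.eq_swap]
      exact (G.mem_incidence_iff_neighbor).mpr (by
        rw [SimpleGraph.mem_neighborSet]; exact h1.symm)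
  rw [hset]
  have hAΔ : (A.card : ℝ) = (Δ : ℝ) - B.card := by
    have := hpart
    push_cast [← this]
    ring
  rw [hAΔ]
  linarith
end

section
/- Let (G_i) be a sequence of graphs on a fixed vertex set where G_{i+1} differs from G_i by insertion or deletion of a single edge. Suppose ε, ε' ≤ 1/2 and M_i is a matching of G_i with maximum-matching-size(G_i) ≤ (1+ε)·|M_i|. For j ≥ i with j ≤ i + ⌊ε'·|M_i|⌋, let M_i^{(j)} be M_i with all edges deleted during updates i+1,…,j removed. Then M_i^{(j)} is a matching of G_j and maximum-matching-size(G_j) ≤ (1 + 2ε + 2ε')·|M_i^{(j)}|. -/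
open Finset SimpleGraph Classical

/-- `N` is a matching of the graph `G`: its members are edges of `G`
and are pairwise vertex-disjoint. -/
def IsMatchingOf {V : Type*} (G : SimpleGraph V) (N : Finset (Sym2 V)) : Prop :=
  (↑N : Set (Sym2 V)) ⊆ G.edgeSet ∧
    ∀ e ∈ N, ∀ f ∈ N, e ≠ f → ∀ v : V, v ∈ e → v ∉ f

/-- Transferring a matching of `G j` back to a matching of `G i`, losing at most one
edge per "insertion step". -/
lemma stmt_17_transfer {V : Type*} (G : ℕ → SimpleGraph V)
    (hupd : ∀ k : ℕ, ∃ e : Sym2 V,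
      (G (k + 1)).edgeSet = (G k).edgeSet ∪ {e} ∨
      (G (k + 1)).edgeSet = (G k).edgeSet \ {e})
    (i : ℕ) : ∀ j, i ≤ j → ∀ N : Finset (Sym2 V), IsMatchingOf (G j) N →
      ∃ N' : Finset (Sym2 V), IsMatchingOf (G i) N' ∧
        N.card ≤ N'.card +
          ((Finset.Ioc i j).filter
            (fun k => ¬ (G k).edgeSet ⊆ (G (k - 1)).edgeSet)).card := by
  classical
  intro j hj
  induction j, hj using Nat.le_induction with
  | base =>
    intro N hN
    exact ⟨N, hN, by simp⟩
  | succ j hj ih =>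
    intro N hN
    by_cases hsub : (G (j + 1)).edgeSet ⊆ (G j).edgeSet
    · obtain ⟨N', hN', hcard⟩ := ih N ⟨fun e he => hsub (hN.1 he), hN.2⟩
      refine ⟨N', hN', hcard.trans ?_⟩
      have hmono : ((Finset.Ioc i j).filter
            (fun k => ¬ (G k).edgeSet ⊆ (G (k - 1)).edgeSet)) ⊆
          ((Finset.Ioc i (j + 1)).filter
            (fun k => ¬ (G k).edgeSet ⊆ (G (k - 1)).edgeSet)) :=
        Finset.filter_subset_filter _ (Finset.Ioc_subset_Ioc_right (Nat.le_succ j))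
      exact Nat.add_le_add_left (Finset.card_le_card hmono) _
    · obtain ⟨e, he | he⟩ := hupd j
      swap
      · exact absurd (he ▸ Set.diff_subset) hsub
      -- insertion case
      have hNe : IsMatchingOf (G j) (N.erase e) := by
        constructor
        · intro f hf
          have hf' : f ∈ N.erase e := hf
          have h1 : f ∈ (G (j + 1)).edgeSet :=
            hN.1 (Finset.mem_coe.mpr (Finset.mem_of_mem_erase hf'))
          rw [he, Set.mem_union] at h1
          rcases h1 with h1 | h1
          · exact h1
          · exact absurd (Set.mem_singleton_iff.mp h1) (Finset.ne_of_mem_erase hf')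
        · intro a ha b hb hab
          exact hN.2 a (Finset.mem_of_mem_erase ha) b (Finset.mem_of_mem_erase hb) hab
      obtain ⟨N', hN', hcard⟩ := ih (N.erase e) hNe
      refine ⟨N', hN', ?_⟩
      have hstep : (j + 1) ∈ ((Finset.Ioc i (j + 1)).filter
          (fun k => ¬ (G k).edgeSet ⊆ (G (k - 1)).edgeSet)) := by
        refine Finset.mem_filter.mpr ⟨Finset.mem_Ioc.mpr ⟨Nat.lt_succ_of_le hj, le_rfl⟩, ?_⟩
        simpa using hsub
      have hnot : (j + 1) ∉ ((Finset.Ioc i j).filter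
          (fun k => ¬ (G k).edgeSet ⊆ (G (k - 1)).edgeSet)) := by
        intro h
        have := (Finset.mem_Ioc.mp (Finset.mem_of_mem_filter _ h)).2
        omega
      have hsubf : insert (j + 1) ((Finset.Ioc i j).filter
            (fun k => ¬ (G k).edgeSet ⊆ (G (k - 1)).edgeSet)) ⊆
          ((Finset.Ioc i (j + 1)).filter
            (fun k => ¬ (G k).edgeSet ⊆ (G (k - 1)).edgeSet)) := by
        intro k hk
        rcases Finset.mem_insert.mp hk with rfl | hk
        · exact hstep
        · exact Finset.filter_subset_filter _ (Finset.Ioc_subset_Ioc_right (Nat.le_succ j)) hk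
      have hcount : ((Finset.Ioc i j).filter
            (fun k => ¬ (G k).edgeSet ⊆ (G (k - 1)).edgeSet)).card + 1 ≤
          ((Finset.Ioc i (j + 1)).filter
            (fun k => ¬ (G k).edgeSet ⊆ (G (k - 1)).edgeSet)).card := by
        have h1 := Finset.card_insert_of_notMem hnot
        have h2 := Finset.card_le_card hsubf
        omega
      have herase : N.card ≤ (N.erase e).card + 1 := by
        by_cases heN : e ∈ N
        · have := Finset.card_erase_add_one heN
          omega
        · rw [Finset.erase_eq_of_notMem heN]
          omega
      omega

theorem stmt_17 {V : Type*} [Fintype V] [DecidableEq V]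
    (G : ℕ → SimpleGraph V) [∀ k, DecidableRel (G k).Adj]
    -- each update inserts or deletes a single edge
    (hupd : ∀ k : ℕ, ∃ e : Sym2 V,
      (G (k + 1)).edgeSet = (G k).edgeSet ∪ {e} ∨
      (G (k + 1)).edgeSet = (G k).edgeSet \ {e})
    (ε ε' : ℝ) (hε0 : 0 ≤ ε) (hε : ε ≤ 1 / 2) (hε'0 : 0 ≤ ε') (hε' : ε' ≤ 1 / 2)
    (i j : ℕ) (hij : i ≤ j)
    -- M_i is a (1+ε)-maximum matching of G_i
    (Mi : Finset (Sym2 V)) (hMi : IsMatchingOf (G i) Mi)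
    (hMiApx : ∀ N : Finset (Sym2 V), IsMatchingOf (G i) N →
      (N.card : ℝ) ≤ (1 + ε) * (Mi.card : ℝ))
    -- j is within the lazy window
    (hwin : (j : ℝ) - (i : ℝ) ≤ ε' * (Mi.card : ℝ))
    -- M_i^{(j)}: M_i with all edges deleted during updates i+1,…,j removed
    (Mij : Finset (Sym2 V))
    (hMij : (↑Mij : Set (Sym2 V)) = {e ∈ (↑Mi : Set (Sym2 V)) | ∀ k : ℕ, i < k → k ≤ j → e ∈ (G k).edgeSet}) :
    IsMatchingOf (G j) Mij ∧
    ∀ N : Finset (Sym2 V), IsMatchingOf (G j) N →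
      (N.card : ℝ) ≤ (1 + 2 * ε + 2 * ε') * (Mij.card : ℝ) := by
  classical
  -- membership characterization of `Mij`
  have hmem : ∀ e : Sym2 V, e ∈ Mij ↔
      e ∈ Mi ∧ ∀ k : ℕ, i < k → k ≤ j → e ∈ (G k).edgeSet := by
    intro e
    constructor
    · intro he
      have h : e ∈ (↑Mij : Set (Sym2 V)) := he
      rw [hMij] at h
      exact ⟨h.1, h.2⟩
    · intro h
      have h' : e ∈ {e ∈ (↑Mi : Set (Sym2 V)) |
          ∀ k : ℕ, i < k → k ≤ j → e ∈ (G k).edgeSet} := ⟨h.1, h.2⟩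
      rw [← hMij] at h'
      exact h'
  have hsubMi : Mij ⊆ Mi := fun e he => ((hmem e).1 he).1
  -- Part 1: Mij is a matching of G j
  have part1 : IsMatchingOf (G j) Mij := by
    constructor
    · intro e he
      have h := (hmem e).1 (Finset.mem_coe.mp he)
      rcases eq_or_lt_of_le hij with h' | h'
      · rw [← h']
        exact hMi.1 (Finset.mem_coe.mpr h.1)
      · exact h.2 j h' le_rfl
    · intro e he f hf hef
      exact hMi.2 e (hsubMi he) f (hsubMi hf) hef
  refine ⟨part1, ?_⟩
  -- insertion and deletion steps
  set Ins : Finset ℕ := (Finset.Ioc i j).filter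
    (fun k => ¬ (G k).edgeSet ⊆ (G (k - 1)).edgeSet) with hInsDef
  set Del : Finset ℕ := (Finset.Ioc i j).filter
    (fun k => ¬ (G (k - 1)).edgeSet ⊆ (G k).edgeSet) with hDelDef
  -- Ins and Del are disjoint subsets of Ioc i j
  have hdisj : Disjoint Ins Del := by
    rw [Finset.disjoint_left]
    intro k hkI hkD
    have h1 := Finset.mem_filter.mp hkI
    have h2 := Finset.mem_filter.mp hkD
    have hk1 : 1 ≤ k := by have := (Finset.mem_Ioc.mp h1.1).1; omega
    have hkk : k - 1 + 1 = k := by omega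
    obtain ⟨e, he | he⟩ := hupd (k - 1)
    · rw [hkk] at he
      exact h2.2 (he ▸ Set.subset_union_left)
    · rw [hkk] at he
      exact h1.2 (he ▸ Set.diff_subset)
  have hcount : Ins.card + Del.card ≤ j - i := by
    have h1 : (Ins ∪ Del).card ≤ (Finset.Ioc i j).card :=
      Finset.card_le_card (Finset.union_subset (Finset.filter_subset _ _)
        (Finset.filter_subset _ _))
    rw [Finset.card_union_of_disjoint hdisj] at h1
    simpa [Nat.card_Ioc] using h1
  -- the removed edges inject into the deletion steps
  have hdelbound : Mi.card ≤ Mij.card + Del.card := by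
    set f : Sym2 V → ℕ := fun e =>
      if h : ∃ k, i < k ∧ k ≤ j ∧ e ∉ (G k).edgeSet then Nat.find h else 0 with hf
    have key : ∀ e ∈ Mi \ Mij, f e ∈ Del ∧
        e ∈ (G (f e - 1)).edgeSet ∧ e ∉ (G (f e)).edgeSet := by
      intro e he
      obtain ⟨heMi, heMij⟩ := Finset.mem_sdiff.mp he
      have hex : ∃ k, i < k ∧ k ≤ j ∧ e ∉ (G k).edgeSet := by
        by_contra hcon
        push_neg at hcon
        exact heMij ((hmem e).mpr ⟨heMi, hcon⟩)
      have hfe : f e = Nat.find hex := by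
        rw [hf]; simp only [dif_pos hex]
      obtain ⟨hik, hkj, hnot⟩ := Nat.find_spec hex
      set k := Nat.find hex with hk
      have hkmin : ∀ k' < k, ¬ (i < k' ∧ k' ≤ j ∧ e ∉ (G k').edgeSet) :=
        fun k' hk' => Nat.find_min hex hk'
      have hprev : e ∈ (G (k - 1)).edgeSet := by
        rcases Nat.lt_or_ge i (k - 1) with hcase | hcase
        · by_contra hcon
          exact hkmin (k - 1) (by omega) ⟨hcase, by omega, hcon⟩
        · have : k - 1 = i := by omega
          rw [this]
          exact hMi.1 (Finset.mem_coe.mpr heMi)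
      have hDelmem : k ∈ Del := by
        refine Finset.mem_filter.mpr ⟨Finset.mem_Ioc.mpr ⟨hik, hkj⟩, ?_⟩
        intro hss
        exact hnot (hss hprev)
      rw [hfe]
      exact ⟨hDelmem, hprev, hnot⟩
    have hinj : Set.InjOn f ↑(Mi \ Mij) := by
      intro a ha b hb hab
      have hka := key a (Finset.mem_coe.mp ha)
      have hkb := key b (Finset.mem_coe.mp hb)
      set k := f a with hkdef
      have hk1 : 0 < k := by
        have := (Finset.mem_Ioc.mp (Finset.mem_filter.mp hka.1).1).1
        omega
      have hkk : k - 1 + 1 = k := by omega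
      obtain ⟨e, he | he⟩ := hupd (k - 1)
      · rw [hkk] at he
        exact absurd (he ▸ Set.mem_union_left _ hka.2.1) hka.2.2
      · rw [hkk] at he
        have hae : a = e := by
          by_contra hne
          exact hka.2.2 (he ▸ Set.mem_diff_of_mem hka.2.1 (by simpa using hne))
        have hbe : b = e := by
          by_contra hne
          refine hkb.2.2 ?_
          rw [← hab] at hkb ⊢
          exact he ▸ Set.mem_diff_of_mem hkb.2.1 (by simpa using hne)
        rw [hae, hbe]
    have hcard1 : (Mi \ Mij).card ≤ Del.card :=
      Finset.card_le_card_of_injOn f (fun e he => (key e he).1) hinj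
    have hcard2 := Finset.card_sdiff_add_card_eq_card hsubMi
    omega
  -- Part 2
  intro N hN
  obtain ⟨N', hN', hc⟩ := stmt_17_transfer G hupd i j hij N hN
  have h1 : (N'.card : ℝ) ≤ (1 + ε) * Mi.card := hMiApx N' hN'
  have h2 : (N.card : ℝ) ≤ (N'.card : ℝ) + (Ins.card : ℝ) := by exact_mod_cast hc
  have h3 : (Mi.card : ℝ) ≤ (Mij.card : ℝ) + (Del.card : ℝ) := by exact_mod_cast hdelbound
  have h4 : (Ins.card : ℝ) + (Del.card : ℝ) ≤ ε' * Mi.card := by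
    have hh : ((Ins.card + Del.card : ℕ) : ℝ) ≤ ((j - i : ℕ) : ℝ) := Nat.cast_le.mpr hcount
    rw [Nat.cast_sub hij] at hh
    push_cast at hh
    linarith
  have ha0 : (0 : ℝ) ≤ (Ins.card : ℝ) := Nat.cast_nonneg _
  have hb0 : (0 : ℝ) ≤ (Del.card : ℝ) := Nat.cast_nonneg _
  have hm0 : (0 : ℝ) ≤ (Mi.card : ℝ) := Nat.cast_nonneg _
  have hc0 : (0 : ℝ) ≤ (Mij.card : ℝ) := Nat.cast_nonneg _
  have key1 : (Ins.card : ℝ) + (1 + 2 * ε + 2 * ε') * (Del.card : ℝ) ≤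
      (1 + 2 * ε + 2 * ε') * ((Ins.card : ℝ) + (Del.card : ℝ)) := by nlinarith
  have key2 : (1 + 2 * ε + 2 * ε') * ((Ins.card : ℝ) + (Del.card : ℝ)) ≤
      (1 + 2 * ε + 2 * ε') * (ε' * Mi.card) :=
    mul_le_mul_of_nonneg_left h4 (by linarith)
  have key3 : (1 + 2 * ε + 2 * ε') * (ε' * Mi.card) ≤ (ε + 2 * ε') * Mi.card := by
    nlinarith [mul_nonneg (mul_nonneg hm0 (by linarith : (0:ℝ) ≤ 1 - 2 * ε'))
      (by linarith : (0:ℝ) ≤ ε + ε')]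
  have key4 : (1 + 2 * ε + 2 * ε') * ((Mi.card : ℝ) - (Del.card : ℝ)) ≤
      (1 + 2 * ε + 2 * ε') * (Mij.card : ℝ) :=
    mul_le_mul_of_nonneg_left (by linarith) (by linarith)
  nlinarith [key1, key2, key3, key4, h1, h2]
end
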